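/- arXiv:2110.12485 — 8 statements merged into one kernel-verified Lean document; each statement's English description precedes it below -/
import Mathlib

section
/- For every probability distribution D on a countable set X and every probability distribution D' on X, the loss of the sampling algorithm D' with respect to D satisfies the lower bound L(D',D) = Σ_{x∈X} D(x)/D'(x) ≥ (Σ_{x∈X} √(D(x)))², where both sides take values in [0,∞]. -/
open scoped ENNReal NNReal

/-- For every probability distribution `D` on a countable set `X` and every probability
distribution `D'` on `X`, the loss `L(D',D) = ∑ D(x)/D'(x)` (valued in `[0,∞]`, with the
conventions `a/0 = ∞` for `a > 0` and `0/0 = 0`) is bounded below by `(∑ √(D x))²`. -/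
theorem sqrt_sum_sq_le_loss {X : Type*} [Countable X] (D D' : X → ℝ≥0)
    (hD : ∑' x, D x = 1) (hD' : ∑' x, D' x = 1) :
    (∑' x, (NNReal.sqrt (D x) : ℝ≥0∞)) ^ 2 ≤ ∑' x, (D x : ℝ≥0∞) / (D' x : ℝ≥0∞) := by
  by_cases h : ∀ x, D' x = 0 → D x = 0
  · letI : MeasurableSpace X := ⊤
    haveI : MeasurableSingletonClass X := ⟨fun _ => trivial⟩
    set f : X → ℝ≥0∞ := fun x => ((D x : ℝ≥0∞) / (D' x : ℝ≥0∞)) ^ (1/2 : ℝ) with hf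
    set g : X → ℝ≥0∞ := fun x => (D' x : ℝ≥0∞) ^ (1/2 : ℝ) with hg
    have hpq : Real.HolderConjugate 2 2 := by constructor <;> norm_num
    have key := ENNReal.lintegral_mul_le_Lp_mul_Lq (μ := MeasureTheory.Measure.count)
      hpq (measurable_from_top (f := f)).aemeasurable
      (measurable_from_top (f := g)).aemeasurable
    rw [MeasureTheory.lintegral_count, MeasureTheory.lintegral_count,
      MeasureTheory.lintegral_count] at key
    have hfg : ∀ x, (NNReal.sqrt (D x) : ℝ≥0∞) = (f * g) x := by
      intro x
      by_cases hx : D' x = 0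
      · simp [hf, hg, hx, h x hx]
      · have hne : (D' x : ℝ≥0∞) ≠ 0 := by exact_mod_cast hx
        simp only [Pi.mul_apply, hf, hg]
        rw [← ENNReal.mul_rpow_of_nonneg _ _ (by norm_num : (0:ℝ) ≤ 1/2),
          ENNReal.div_mul_cancel hne (ENNReal.coe_ne_top),
          NNReal.sqrt_eq_rpow, ENNReal.coe_rpow_of_nonneg _ (by norm_num : (0:ℝ) ≤ 1/2)]
    have hf2 : ∀ x, f x ^ (2:ℝ) = (D x : ℝ≥0∞) / (D' x : ℝ≥0∞) := by
      intro x
      rw [hf, ← ENNReal.rpow_mul]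
      norm_num
    have hg2 : ∀ x, g x ^ (2:ℝ) = (D' x : ℝ≥0∞) := by
      intro x
      rw [hg, ← ENNReal.rpow_mul]
      norm_num
    have hsum' : ∑' x, (D' x : ℝ≥0∞) = 1 := by
      have hs : Summable D' := by
        by_contra hs
        rw [tsum_eq_zero_of_not_summable hs] at hD'
        exact one_ne_zero hD'.symm
      rw [← ENNReal.coe_tsum hs, hD', ENNReal.coe_one]
    simp only [hf2, hg2, hsum', ENNReal.one_rpow, mul_one] at key
    calc (∑' x, (NNReal.sqrt (D x) : ℝ≥0∞)) ^ 2
        = (∑' x, (f * g) x) ^ 2 := by rw [tsum_congr hfg]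
      _ ≤ ((∑' x, (D x : ℝ≥0∞) / (D' x : ℝ≥0∞)) ^ ((1:ℝ)/2)) ^ 2 :=
          pow_le_pow_left₀ (zero_le) key 2
      _ = ∑' x, (D x : ℝ≥0∞) / (D' x : ℝ≥0∞) := by
          rw [← ENNReal.rpow_natCast _ 2, ← ENNReal.rpow_mul]
          norm_num
  · push_neg at h
    obtain ⟨x, hx0, hxne⟩ := h
    have : (D x : ℝ≥0∞) / (D' x : ℝ≥0∞) = ⊤ := by
      rw [hx0, ENNReal.coe_zero, ENNReal.div_zero (by exact_mod_cast hxne)]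
    have htop : ∑' x, (D x : ℝ≥0∞) / (D' x : ℝ≥0∞) = ⊤ :=
      top_le_iff.mp (this ▸ ENNReal.le_tsum x)
    rw [htop]
    exact le_top
end

section
/- Let D be a probability distribution on a countable set X such that Σ_{x∈X} √(D(x)) < ∞. Then the distribution √D, defined by √D(x) = √(D(x)) / Σ_{y∈X} √(D(y)), is loss optimal among all sampling algorithms: for every probability distribution D' on X, L(√D, D) ≤ L(D', D). -/
open scoped ENNReal NNReal

/-- Let `D` be a probability distribution on a countable set `X` with `∑ √(D x) < ∞`.
Then the distribution `√D`, defined by `√D x = √(D x) / ∑ y, √(D y)`, is loss optimal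
among all sampling algorithms: for every probability distribution `D'` on `X`,
`L(√D, D) ≤ L(D', D)`, where the loss `L(D',D) = ∑ D x / D' x` is valued in `[0,∞]`
with the conventions `a/0 = ∞` for `a > 0` and `0/0 = 0`. -/
theorem sqrt_distribution_loss_optimal {X : Type*} [Countable X]
    (D : X → ℝ≥0) (hD : ∑' x, D x = 1)
    (hfin : (∑' x, (NNReal.sqrt (D x) : ℝ≥0∞)) ≠ ∞)
    (D' : X → ℝ≥0) (hD' : ∑' x, D' x = 1) :
    ∑' x, (D x : ℝ≥0∞) /
        ((NNReal.sqrt (D x) : ℝ≥0∞) / ∑' y, (NNReal.sqrt (D y) : ℝ≥0∞))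
      ≤ ∑' x, (D x : ℝ≥0∞) / (D' x : ℝ≥0∞) := by
  set S : ℝ≥0∞ := ∑' y, (NNReal.sqrt (D y) : ℝ≥0∞) with hS
  -- Step 1: LHS ≤ S * S
  have hstep1 : (∑' x, (D x : ℝ≥0∞) / ((NNReal.sqrt (D x) : ℝ≥0∞) / S)) ≤ S * S := by
    have hle : ∀ x, (D x : ℝ≥0∞) / ((NNReal.sqrt (D x) : ℝ≥0∞) / S)
        ≤ (NNReal.sqrt (D x) : ℝ≥0∞) * S := by
      intro x
      rcases eq_or_ne (D x) 0 with h0 | h0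
      · simp [h0]
      · have hs0 : (NNReal.sqrt (D x) : ℝ≥0∞) ≠ 0 := by
          simp only [ne_eq, ENNReal.coe_eq_zero, ← pos_iff_ne_zero, NNReal.sqrt_pos]
          exact pos_iff_ne_zero.mpr h0
        have hsT : (NNReal.sqrt (D x) : ℝ≥0∞) ≠ ∞ := ENNReal.coe_ne_top
        have hD_eq : (D x : ℝ≥0∞) = (NNReal.sqrt (D x) : ℝ≥0∞) * (NNReal.sqrt (D x) : ℝ≥0∞) := by
          rw [← ENNReal.coe_mul, NNReal.mul_self_sqrt]
        rw [div_eq_mul_inv, ENNReal.inv_div (Or.inr hsT) (Or.inr hs0), hD_eq,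
          mul_assoc, ENNReal.mul_div_cancel hs0 hsT, mul_comm]
    calc (∑' x, (D x : ℝ≥0∞) / ((NNReal.sqrt (D x) : ℝ≥0∞) / S))
        ≤ ∑' x, (NNReal.sqrt (D x) : ℝ≥0∞) * S := ENNReal.tsum_le_tsum hle
      _ = S * S := by rw [ENNReal.tsum_mul_right]
  refine hstep1.trans ?_
  -- Step 2: S * S ≤ RHS via Cauchy–Schwarz, in NNReal
  by_cases hbad : ∃ x, D' x = 0 ∧ D x ≠ 0
  · obtain ⟨x, hx0, hx⟩ := hbad
    have : (∑' x, (D x : ℝ≥0∞) / (D' x : ℝ≥0∞)) = ∞ := by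
      refine ENNReal.tsum_eq_top_of_eq_top ⟨x, ?_⟩
      simp [hx0, ENNReal.div_zero, hx]
    simp [this]
  push_neg at hbad
  by_cases htop : (∑' x, (D x : ℝ≥0∞) / (D' x : ℝ≥0∞)) = ∞
  · simp [htop]
  -- pointwise the ENNReal quotient is a coercion
  have hcoe : ∀ x, (D x : ℝ≥0∞) / (D' x : ℝ≥0∞) = ((D x / D' x : ℝ≥0) : ℝ≥0∞) := by
    intro x
    rcases eq_or_ne (D' x) 0 with h0 | h0
    · have : D x = 0 := hbad x h0
      simp [h0, this]
    · rw [ENNReal.coe_div h0]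
  have hsum_q : Summable (fun x => D x / D' x) := by
    rw [← ENNReal.tsum_coe_ne_top_iff_summable]
    simpa [← hcoe] using htop
  have hsum_D' : Summable D' := by
    by_contra h
    rw [tsum_eq_zero_of_not_summable h] at hD'
    exact one_ne_zero hD'.symm
  have hsum_sqrt : Summable (fun x => NNReal.sqrt (D x)) :=
    ENNReal.tsum_coe_ne_top_iff_summable.mp hfin
  -- Cauchy–Schwarz (Hölder with p = q = 2)
  have hconj : (2 : ℝ).HolderConjugate 2 := Real.holderConjugate_iff.mpr ⟨one_lt_two, by norm_num⟩
  have hkey : ∀ a : ℝ≥0, (NNReal.sqrt a) ^ (2 : ℝ) = a := by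
    intro a
    rw [NNReal.sqrt_eq_rpow, ← NNReal.rpow_mul]
    norm_num
  have hf2 : ∀ x, (NNReal.sqrt (D x / D' x)) ^ (2 : ℝ) = D x / D' x := fun x => hkey _
  have hg2 : ∀ x, (NNReal.sqrt (D' x)) ^ (2 : ℝ) = D' x := fun x => hkey _
  have hfg : ∀ x, NNReal.sqrt (D x / D' x) * NNReal.sqrt (D' x) = NNReal.sqrt (D x) := by
    intro x
    rcases eq_or_ne (D' x) 0 with h0 | h0
    · have : D x = 0 := hbad x h0
      simp [h0, this]
    · rw [← NNReal.sqrt_mul, div_mul_cancel₀ _ h0]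
  have hCS := NNReal.inner_le_Lp_mul_Lq_tsum' hconj
    (f := fun x => NNReal.sqrt (D x / D' x)) (g := fun x => NNReal.sqrt (D' x))
    (by simpa only [hf2] using hsum_q) (by simpa only [hg2] using hsum_D')
  simp only [hfg, hf2, hg2, hD'] at hCS
  -- hCS : ∑' sqrt (D x) ≤ (∑' D x / D' x) ^ (1/2) * 1 ^ (1/2)
  set T : ℝ≥0 := ∑' x, D x / D' x with hT
  have hCS' : (∑' x, NNReal.sqrt (D x)) ≤ NNReal.sqrt T := by
    calc (∑' x, NNReal.sqrt (D x)) ≤ T ^ (1 / 2 : ℝ) * (1 : ℝ≥0) ^ (1 / 2 : ℝ) := hCS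
      _ = NNReal.sqrt T := by rw [NNReal.sqrt_eq_rpow]; simp
  have hSeq : S = ((∑' x, NNReal.sqrt (D x) : ℝ≥0) : ℝ≥0∞) := (ENNReal.coe_tsum hsum_sqrt).symm
  have hRHS : (∑' x, (D x : ℝ≥0∞) / (D' x : ℝ≥0∞)) = (T : ℝ≥0∞) := by
    simp only [hcoe]
    exact (ENNReal.coe_tsum hsum_q).symm
  rw [hSeq, hRHS, ← ENNReal.coe_mul, ENNReal.coe_le_coe]
  calc (∑' x, NNReal.sqrt (D x)) * (∑' x, NNReal.sqrt (D x))
      ≤ NNReal.sqrt T * NNReal.sqrt T := mul_le_mul' hCS' hCS'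
    _ = T := NNReal.mul_self_sqrt T
end

section
/- Let D be a probability distribution on a countable set X such that Σ_{x∈X} √(D(x)) = ∞. Then every sampling algorithm has infinite loss: for every probability distribution D' on X, L(D', D) = Σ_{x∈X} D(x)/D'(x) = ∞. -/
open scoped ENNReal NNReal

/-- Let `D` be a probability distribution on a countable set `X` such that
`∑ √(D x) = ∞`. Then every sampling algorithm has infinite loss: for every probability
distribution `D'` on `X`, `L(D', D) = ∑ D x / D' x = ∞` (loss valued in `[0,∞]`,
with the conventions `a/0 = ∞` for `a > 0` and `0/0 = 0`). -/
theorem loss_eq_top_of_sqrt_sum_eq_top {X : Type*} [Countable X]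
    (D : X → ℝ≥0) (hD : ∑' x, D x = 1)
    (htop : (∑' x, (NNReal.sqrt (D x) : ℝ≥0∞)) = ∞)
    (D' : X → ℝ≥0) (hD' : ∑' x, D' x = 1) :
    ∑' x, (D x : ℝ≥0∞) / (D' x : ℝ≥0∞) = ∞ := by
  by_cases hz : ∃ x, D' x = 0 ∧ D x ≠ 0
  · obtain ⟨x, hx0, hxD⟩ := hz
    refine ENNReal.tsum_eq_top_of_eq_top ⟨x, ?_⟩
    rw [hx0]
    simp [ENNReal.div_zero, hxD]
  · push_neg at hz
    -- pointwise bound: √(D x) ≤ D' x + D x / D' x in ℝ≥0∞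
    have key : ∀ x, (NNReal.sqrt (D x) : ℝ≥0∞) ≤ (D' x : ℝ≥0∞) + (D x : ℝ≥0∞) / (D' x : ℝ≥0∞) := by
      intro x
      by_cases h : D' x = 0
      · have : D x = 0 := hz x h
        simp [this, h]
      · rw [← ENNReal.coe_div h, ← ENNReal.coe_add, ENNReal.coe_le_coe]
        rw [← NNReal.sqrt_sq (D' x + D x / D' x)]
        apply NNReal.sqrt_le_sqrt.2
        have hD : D x = D' x * (D x / D' x) := by
          field_simp
        rw [sq]; conv_lhs => rw [hD]
        calc D' x * (D x / D' x) ≤ (D' x + D x / D' x) * (D x / D' x) := by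
              gcongr; exact le_self_add
          _ ≤ (D' x + D x / D' x) * (D' x + D x / D' x) := by
              gcongr; exact le_add_self
    have hle : (∑' x, (NNReal.sqrt (D x) : ℝ≥0∞)) ≤
        (∑' x, (D' x : ℝ≥0∞)) + ∑' x, (D x : ℝ≥0∞) / (D' x : ℝ≥0∞) := by
      rw [← ENNReal.tsum_add]
      exact ENNReal.tsum_le_tsum key
    have hsum' : (∑' x, (D' x : ℝ≥0∞)) = 1 := by
      rw [← ENNReal.coe_tsum]
      · exact_mod_cast hD'
      · by_contra h
        rw [tsum_eq_zero_of_not_summable h] at hD'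
        exact one_ne_zero hD'.symm
    rw [htop, hsum'] at hle
    by_contra h
    exact (lt_irrefl (⊤ : ℝ≥0∞)) (lt_of_le_of_lt hle (by
      exact ENNReal.add_lt_top.2 ⟨ENNReal.one_lt_top, lt_top_iff_ne_top.2 h⟩))
end

section
/- For every probability distribution D on a countable set X, the infimum of the loss over all sampling algorithms is exactly the square of the sum of square roots: inf_{D'} Σ_{x∈X} D(x)/D'(x) = (Σ_{x∈X} √(D(x)))², where the infimum ranges over all probability distributions D' on X and both sides take values in [0,∞] (with ∞² = ∞); moreover, when Σ_{x∈X} √(D(x)) < ∞ the infimum is attained by the normalized square-root distribution √D(x) = √(D(x)) / Σ_{y∈X} √(D(y)). -/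
open scoped ENNReal NNReal

open MeasureTheory in
private lemma tsum_cs {X : Type*} [Countable X] (f g : X → ℝ≥0∞) :
    (∑' x, f x * g x)
      ≤ (∑' x, f x ^ (2 : ℝ)) ^ (1 / 2 : ℝ) * (∑' x, g x ^ (2 : ℝ)) ^ (1 / 2 : ℝ) := by
  letI : MeasurableSpace X := ⊤
  haveI : MeasurableSingletonClass X := ⟨fun _ => trivial⟩
  have hpq : Real.HolderConjugate 2 2 := Real.HolderConjugate.two_two
  have := ENNReal.lintegral_mul_le_Lp_mul_Lq (Measure.count (α := X)) hpq
    (measurable_from_top (f := f)).aemeasurable (measurable_from_top (f := g)).aemeasurable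
  simpa [lintegral_count] using this

/-- For every probability distribution `D` on a countable set `X`, the infimum of the loss
`∑ D x / D' x` over all probability distributions `D'` on `X` equals `(∑ √(D x))²`
(both sides valued in `[0,∞]`, with `∞² = ∞` and the conventions `a/0 = ∞` for `a > 0`,
`0/0 = 0`); moreover, when `∑ √(D x) < ∞` the infimum is attained by the normalized
square-root distribution `√D x = √(D x) / ∑ y, √(D y)`. -/
theorem iInf_loss_eq_sqrt_sum_sq {X : Type*} [Countable X]
    (D : X → ℝ≥0) (hD : ∑' x, D x = 1) :
    (⨅ D' : {f : X → ℝ≥0 // ∑' x, f x = 1},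
        ∑' x, (D x : ℝ≥0∞) / ((D' : X → ℝ≥0) x : ℝ≥0∞))
      = (∑' x, (NNReal.sqrt (D x) : ℝ≥0∞)) ^ 2 ∧
    ((∑' x, (NNReal.sqrt (D x) : ℝ≥0∞)) ≠ ∞ →
      ∃ D' : {f : X → ℝ≥0 // ∑' x, f x = 1},
        (∀ x, ((D' : X → ℝ≥0) x : ℝ≥0∞)
            = (NNReal.sqrt (D x) : ℝ≥0∞) / ∑' y, (NNReal.sqrt (D y) : ℝ≥0∞)) ∧
        ∑' x, (D x : ℝ≥0∞) / ((D' : X → ℝ≥0) x : ℝ≥0∞)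
          = (∑' x, (NNReal.sqrt (D x) : ℝ≥0∞)) ^ 2) := by
  set S : ℝ≥0∞ := ∑' x, (NNReal.sqrt (D x) : ℝ≥0∞) with hS
  -- D is summable
  have hDsum : Summable D := by
    by_contra h
    rw [tsum_eq_zero_of_not_summable h] at hD
    exact one_ne_zero hD.symm
  -- lower bound
  have lb : ∀ D' : {f : X → ℝ≥0 // ∑' x, f x = 1},
      S ^ 2 ≤ ∑' x, (D x : ℝ≥0∞) / ((D' : X → ℝ≥0) x : ℝ≥0∞) := by
    rintro ⟨D', hD'⟩
    simp only
    set L : ℝ≥0∞ := ∑' x, (D x : ℝ≥0∞) / (D' x : ℝ≥0∞) with hL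
    by_cases hbad : ∃ x, D' x = 0 ∧ D x ≠ 0
    · obtain ⟨x, hx0, hxD⟩ := hbad
      have : (D x : ℝ≥0∞) / (D' x : ℝ≥0∞) = ∞ := by
        simp only [hx0, ENNReal.coe_zero]
        exact ENNReal.div_zero (by exact_mod_cast hxD)
      have : L = ∞ := eq_top_iff.2 (this ▸ ENNReal.le_tsum x)
      simp [this]
    push_neg at hbad
    -- pointwise bound
    have key : ∀ x, (NNReal.sqrt (D x) : ℝ≥0∞)
        ≤ ((D x : ℝ≥0∞) / (D' x : ℝ≥0∞)) ^ (1/2 : ℝ) * ((D' x : ℝ≥0∞)) ^ (1/2 : ℝ) := by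
      intro x
      by_cases hx : D x = 0
      · simp [hx]
      have h0' : D' x ≠ 0 := fun h => hx (hbad x h)
      have h0 : (D' x : ℝ≥0∞) ≠ 0 := by exact_mod_cast h0'
      have hcancel : (D x : ℝ≥0∞) / (D' x : ℝ≥0∞) * (D' x : ℝ≥0∞) = (D x : ℝ≥0∞) :=
        ENNReal.div_mul_cancel h0 ENNReal.coe_ne_top
      have hsq : (NNReal.sqrt (D x) : ℝ≥0∞) = ((D x : ℝ≥0∞)) ^ (1/2 : ℝ) := by
        rw [← ENNReal.coe_rpow_of_nonneg _ (by norm_num), NNReal.sqrt_eq_rpow]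
      calc (NNReal.sqrt (D x) : ℝ≥0∞) = ((D x : ℝ≥0∞)) ^ (1/2 : ℝ) := hsq
        _ = ((D x : ℝ≥0∞) / (D' x : ℝ≥0∞) * (D' x : ℝ≥0∞)) ^ (1/2 : ℝ) := by rw [hcancel]
        _ = ((D x : ℝ≥0∞) / (D' x : ℝ≥0∞)) ^ (1/2 : ℝ) * ((D' x : ℝ≥0∞)) ^ (1/2 : ℝ) :=
            ENNReal.mul_rpow_of_nonneg _ _ (by norm_num)
        _ ≤ ((D x : ℝ≥0∞) / (D' x : ℝ≥0∞)) ^ (1/2 : ℝ) * ((D' x : ℝ≥0∞)) ^ (1/2 : ℝ) := le_rfl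
    have hsumD' : Summable D' := by
      by_contra h
      rw [tsum_eq_zero_of_not_summable h] at hD'
      exact one_ne_zero hD'.symm
    have hD'1 : (∑' x, (D' x : ℝ≥0∞)) = 1 := by
      rw [← ENNReal.coe_tsum hsumD', hD']; norm_num
    have hchain : S ≤ L ^ (1/2 : ℝ) := by
      calc S ≤ ∑' x, ((D x : ℝ≥0∞) / (D' x : ℝ≥0∞)) ^ (1/2 : ℝ) * ((D' x : ℝ≥0∞)) ^ (1/2 : ℝ) :=
              Summable.tsum_le_tsum key ENNReal.summable ENNReal.summable
        _ ≤ (∑' x, (((D x : ℝ≥0∞) / (D' x : ℝ≥0∞)) ^ (1/2 : ℝ)) ^ (2:ℝ)) ^ (1/2 : ℝ)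
              * (∑' x, (((D' x : ℝ≥0∞)) ^ (1/2 : ℝ)) ^ (2:ℝ)) ^ (1/2 : ℝ) := tsum_cs _ _
        _ = L ^ (1/2 : ℝ) := by
              simp only [← ENNReal.rpow_natCast, ← ENNReal.rpow_mul]
              norm_num [hD'1, hL]
    calc S ^ 2 ≤ (L ^ (1/2 : ℝ)) ^ 2 := pow_le_pow_left' hchain 2
      _ = L := by
          rw [← ENNReal.rpow_natCast (L ^ (1/2:ℝ)), ← ENNReal.rpow_mul]
          norm_num
  -- attainment
  have attain : S ≠ ∞ →
      ∃ D' : {f : X → ℝ≥0 // ∑' x, f x = 1},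
        (∀ x, ((D' : X → ℝ≥0) x : ℝ≥0∞) = (NNReal.sqrt (D x) : ℝ≥0∞) / S) ∧
        ∑' x, (D x : ℝ≥0∞) / ((D' : X → ℝ≥0) x : ℝ≥0∞) = S ^ 2 := by
    intro hfin
    have hsumsq : Summable (fun x => NNReal.sqrt (D x)) :=
      ENNReal.tsum_coe_ne_top_iff_summable.1 hfin
    set t : ℝ≥0 := ∑' x, NNReal.sqrt (D x) with ht
    have hSt : S = (t : ℝ≥0∞) := (ENNReal.coe_tsum hsumsq).symm
    have ht1 : (1 : ℝ≥0) ≤ t := by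
      rw [← hD, ht]
      refine Summable.tsum_le_tsum (fun x => ?_) hDsum hsumsq
      have hx1 : D x ≤ 1 := by
        rw [← hD]; exact Summable.le_tsum hDsum x (fun _ _ => zero_le)
      calc D x = NNReal.sqrt (D x) * NNReal.sqrt (D x) := (NNReal.mul_self_sqrt _).symm
        _ ≤ 1 * NNReal.sqrt (D x) := by
            gcongr
            calc NNReal.sqrt (D x) ≤ NNReal.sqrt 1 := NNReal.sqrt_le_sqrt.2 hx1
              _ = 1 := NNReal.sqrt_one
        _ = NNReal.sqrt (D x) := one_mul _
    have ht0 : t ≠ 0 := fun h => by simp [h] at ht1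
    set f : X → ℝ≥0 := fun x => NNReal.sqrt (D x) * t⁻¹ with hf
    have hsumf : Summable f := hsumsq.mul_right _
    have hfsum1 : ∑' x, f x = 1 := by
      rw [hf]
      simp only
      rw [NNReal.tsum_mul_right, ← ht, mul_inv_cancel₀ ht0]
    refine ⟨⟨f, hfsum1⟩, fun x => ?_, ?_⟩
    · show ((f x : ℝ≥0∞)) = _
      rw [hf, hSt]
      push_cast [ENNReal.coe_inv ht0]
      rw [div_eq_mul_inv]
    · show (∑' x, (D x : ℝ≥0∞) / (f x : ℝ≥0∞)) = S ^ 2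
      have hterm : ∀ x, (D x : ℝ≥0∞) / (f x : ℝ≥0∞)
          = (NNReal.sqrt (D x) : ℝ≥0∞) * (t : ℝ≥0∞) := by
        intro x
        by_cases hx : D x = 0
        · simp [hx, hf]
        have hs0 : NNReal.sqrt (D x) ≠ 0 := by
          simpa [NNReal.sqrt_eq_zero] using hx
        have hf0 : f x ≠ 0 := by
          simp [hf, hs0, ht0]
        have hnn : D x / f x = NNReal.sqrt (D x) * t := by
          rw [div_eq_iff hf0, hf]
          simp only
          rw [mul_mul_mul_comm, mul_inv_cancel₀ ht0, mul_one, NNReal.mul_self_sqrt]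
        rw [← ENNReal.coe_div hf0, hnn, ENNReal.coe_mul]
      rw [tsum_congr hterm, ENNReal.tsum_mul_right, ← hS, hSt, sq]
  constructor
  · refine le_antisymm ?_ (le_iInf lb)
    by_cases hfin : S = ∞
    · have : S ^ 2 = ⊤ := by simp [hfin]
      rw [this]
      exact le_top
    · obtain ⟨D', _, hloss⟩ := attain hfin
      exact hloss ▸ iInf_le _ D'
  · intro hfin
    obtain ⟨D', hpt, hloss⟩ := attain hfin
    exact ⟨D', hpt, hloss⟩
end

section
/- Let D be a probability distribution on a countable set X and let f : ℕ → X be a bijection such that the sequence n ↦ D(f(n)) is non-increasing. Then f is loss optimal among all deterministic enumeration algorithms: for every function g : ℕ → X, Σ_{n∈ℕ} D(f(n))·(n+1) ≤ Σ_{x∈X} D(x)·(1 + inf{n ∈ ℕ : g(n) = x}), where both sides take values in [0,∞] and the infimum of the empty set is ∞. -/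
open scoped ENNReal NNReal

private lemma aux_antitone_sum (a : ℕ → ℝ≥0∞) (ha : ∀ m n : ℕ, m ≤ n → a n ≤ a m) :
    ∀ (k : ℕ) (T : Finset ℕ), T.card ≤ k → ∑ i ∈ T, a i ≤ ∑ i ∈ Finset.range k, a i := by
  intro k
  induction k with
  | zero =>
    intro T hT
    simp only [Nat.le_zero, Finset.card_eq_zero] at hT; simp [hT]
  | succ k ih =>
    intro T hT
    rcases T.eq_empty_or_nonempty with rfl | hne
    · simp
    · set M := T.max' hne with hM
      have hMmem : M ∈ T := T.max'_mem hne
      by_cases hc : T.card ≤ k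
      · calc ∑ i ∈ T, a i ≤ ∑ i ∈ Finset.range k, a i := ih T hc
          _ ≤ ∑ i ∈ Finset.range (k+1), a i :=
            Finset.sum_le_sum_of_subset (Finset.range_subset_range.mpr (Nat.le_succ k))
      · have hcard : T.card = k + 1 := le_antisymm hT (by omega)
        have hkM : k ≤ M := by
          have hsub : T ⊆ Finset.Iic M := fun i hi => Finset.mem_Iic.mpr (T.le_max' i hi)
          have := Finset.card_le_card hsub
          rw [hcard, Nat.card_Iic] at this
          omega
        have herase : (T.erase M).card ≤ k := by
          rw [Finset.card_erase_of_mem hMmem, hcard]; omega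
        calc ∑ i ∈ T, a i = ∑ i ∈ T.erase M, a i + a M :=
              (Finset.sum_erase_add T a hMmem).symm
          _ ≤ ∑ i ∈ Finset.range k, a i + a k :=
              add_le_add (ih _ herase) (ha k M hkM)
          _ = ∑ i ∈ Finset.range (k+1), a i := (Finset.sum_range_succ a k).symm

private lemma aux_layer (M : ℕ) :
    (∑' k : ℕ, if k ≤ M then (1:ℝ≥0∞) else 0) = (M:ℝ≥0∞) + 1 := by
  rw [tsum_eq_sum (s := Finset.range (M+1))
    (fun k hk => by rw [if_neg]; simp only [Finset.mem_range] at hk; omega)]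
  rw [Finset.sum_congr rfl
    (fun k hk => if_pos (by simp only [Finset.mem_range] at hk; omega)),
    Finset.sum_const, Finset.card_range, nsmul_eq_mul, mul_one]
  push_cast; ring

/-- Let `D` be a probability distribution on a countable set `X` and `f : ℕ → X` a
bijection enumerating `X` in non-increasing order of probabilities. Then `f` is loss
optimal among all deterministic enumeration algorithms: for every `g : ℕ → X`,
`∑ n, D (f n) · (n+1) ≤ ∑ x, D x · (1 + inf {n | g n = x})`, both sides valued in
`[0,∞]`, with the infimum of the empty set being `∞`. -/
theorem sorted_enumeration_loss_optimal {X : Type*} [Countable X]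
    (D : X → ℝ≥0) (hD : ∑' x, D x = 1)
    (f : ℕ → X) (hf : Function.Bijective f)
    (hmono : ∀ m n : ℕ, m ≤ n → D (f n) ≤ D (f m))
    (g : ℕ → X) :
    ∑' n : ℕ, (D (f n) : ℝ≥0∞) * ((n : ℝ≥0∞) + 1)
      ≤ ∑' x : X, (D x : ℝ≥0∞) * (1 + ⨅ n : {n : ℕ // g n = x}, ((n : ℕ) : ℝ≥0∞)) := by
  classical
  have hsumm : Summable D := by
    by_contra h
    rw [tsum_eq_zero_of_not_summable h] at hD
    exact one_ne_zero hD.symm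
  have htotal : ∑' x : X, (D x : ℝ≥0∞) = 1 := by
    rw [← ENNReal.coe_tsum hsumm, hD, ENNReal.coe_one]
  let e : ℕ ≃ X := Equiv.ofBijective f hf
  have he1 : ∀ n : ℕ, e n = f n := fun n => rfl
  have hfe : ∀ x : X, f (e.symm x) = x := fun x => by
    rw [← he1]; exact e.apply_symm_apply x
  have hsymmf : ∀ n : ℕ, e.symm (f n) = n := fun n => by
    rw [← he1]; exact e.symm_apply_apply n
  set I : X → ℝ≥0∞ := fun x => ⨅ n : {n : ℕ // g n = x}, ((n : ℕ) : ℝ≥0∞) with hIdef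
  have hIfind : ∀ (x : X) (h : ∃ n, g n = x), I x = ((Nat.find h : ℕ) : ℝ≥0∞) := by
    intro x h
    refine le_antisymm (iInf_le_of_le ⟨Nat.find h, Nat.find_spec h⟩ le_rfl)
      (le_iInf fun n => ?_)
    exact_mod_cast Nat.find_min' h n.2
  have hIempty : ∀ x : X, ¬(∃ n, g n = x) → I x = ⊤ := by
    intro x h
    haveI : IsEmpty {n : ℕ // g n = x} := ⟨fun n => h ⟨n.1, n.2⟩⟩
    exact iInf_of_empty _
  have hcastlt : ∀ k m : ℕ, ((k : ℝ≥0∞) < 1 + (m : ℝ≥0∞)) ↔ k < 1 + m := by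
    intro k m
    rw [show (1:ℝ≥0∞) + (m:ℝ≥0∞) = ((1+m : ℕ) : ℝ≥0∞) by push_cast; ring, Nat.cast_lt]
  -- LHS rewrite
  have hLHS : ∑' n : ℕ, (D (f n) : ℝ≥0∞) * ((n : ℝ≥0∞) + 1)
      = ∑' k : ℕ, ∑' x : X, (D x : ℝ≥0∞) * (if k ≤ (e.symm x : ℕ) then 1 else 0) := by
    rw [← ENNReal.tsum_comm]
    calc ∑' n : ℕ, (D (f n) : ℝ≥0∞) * ((n : ℝ≥0∞) + 1)
        = ∑' x : X, (D x : ℝ≥0∞) * (((e.symm x : ℕ) : ℝ≥0∞) + 1) := by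
          rw [← Equiv.tsum_eq e (fun x => (D x : ℝ≥0∞) * (((e.symm x : ℕ) : ℝ≥0∞) + 1))]
          exact tsum_congr fun n => by rw [he1, hsymmf]
      _ = ∑' x : X, ∑' k : ℕ, (D x : ℝ≥0∞) * (if k ≤ (e.symm x : ℕ) then 1 else 0) := by
          refine tsum_congr fun x => ?_
          rw [ENNReal.tsum_mul_left, aux_layer (e.symm x)]
  -- RHS bound
  have hIlayer : ∀ x : X,
      (∑' k : ℕ, if (k : ℝ≥0∞) < 1 + I x then (1:ℝ≥0∞) else 0) ≤ 1 + I x := by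
    intro x
    by_cases h : ∃ n, g n = x
    · rw [hIfind x h]
      have hcongr : ∀ k : ℕ, (if (k : ℝ≥0∞) < 1 + ((Nat.find h : ℕ) : ℝ≥0∞) then (1:ℝ≥0∞) else 0)
          = (if k ≤ Nat.find h then (1:ℝ≥0∞) else 0) := by
        intro k
        by_cases hk : k ≤ Nat.find h
        · rw [if_pos hk, if_pos ((hcastlt k _).mpr (by omega))]
        · rw [if_neg hk, if_neg (fun hc => hk (by have := (hcastlt k _).mp hc; omega))]
      rw [tsum_congr hcongr, aux_layer]
      rw [add_comm]
    · rw [hIempty x h]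
      exact le_top
  have hRHS : (∑' k : ℕ, ∑' x : X, (D x : ℝ≥0∞) * (if (k : ℝ≥0∞) < 1 + I x then 1 else 0))
      ≤ ∑' x : X, (D x : ℝ≥0∞) * (1 + I x) := by
    rw [ENNReal.tsum_comm]
    refine ENNReal.tsum_le_tsum fun x => ?_
    rw [ENNReal.tsum_mul_left]
    exact mul_le_mul_right (hIlayer x) _
  -- per-layer inequality
  have hperk : ∀ k : ℕ,
      (∑' x : X, (D x : ℝ≥0∞) * (if k ≤ (e.symm x : ℕ) then 1 else 0))
        ≤ ∑' x : X, (D x : ℝ≥0∞) * (if (k : ℝ≥0∞) < 1 + I x then 1 else 0) := by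
    intro k
    set A : Finset X := (Finset.range k).image g with hA
    set B : Finset X := (Finset.range k).image f with hB
    have haB : (∑' x : X, (D x : ℝ≥0∞) * (if (e.symm x : ℕ) < k then 1 else 0))
        = ∑ x ∈ B, (D x : ℝ≥0∞) := by
      rw [tsum_eq_sum (s := B) (fun x hx => by
        rw [if_neg, mul_zero]
        intro hlt
        exact hx (Finset.mem_image.mpr ⟨e.symm x, Finset.mem_range.mpr hlt, hfe x⟩))]
      refine Finset.sum_congr rfl fun x hx => ?_
      rcases Finset.mem_image.mp hx with ⟨i, hi, rfl⟩
      rw [if_pos, mul_one]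
      rw [hsymmf]
      exact Finset.mem_range.mp hi
    have hgB : (∑' x : X, (D x : ℝ≥0∞) * (if 1 + I x ≤ (k : ℝ≥0∞) then 1 else 0))
        ≤ ∑ x ∈ A, (D x : ℝ≥0∞) := by
      rw [tsum_eq_sum (s := A) (fun x hx => by
        rw [if_neg, mul_zero]
        intro hle
        by_cases h : ∃ n, g n = x
        · rw [hIfind x h] at hle
          have hfk : Nat.find h < k := by
            have : ((1 + Nat.find h : ℕ) : ℝ≥0∞) ≤ ((k : ℕ) : ℝ≥0∞) := by
              push_cast; exact hle
            have := Nat.cast_le (α := ℝ≥0∞) |>.mp this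
            omega
          exact hx (Finset.mem_image.mpr
            ⟨Nat.find h, Finset.mem_range.mpr hfk, Nat.find_spec h⟩)
        · rw [hIempty x h] at hle
          simp at hle)]
      refine Finset.sum_le_sum fun x _ => ?_
      by_cases h : 1 + I x ≤ (k : ℝ≥0∞) <;> simp [h]
    have hBA : (∑ x ∈ A, (D x : ℝ≥0∞)) ≤ ∑ x ∈ B, (D x : ℝ≥0∞) := by
      have h1 : ∑ i ∈ A.image e.symm, (D (f i) : ℝ≥0∞) = ∑ x ∈ A, (D x : ℝ≥0∞) := by
        rw [Finset.sum_image (fun x _ y _ h => e.symm.injective h)]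
        exact Finset.sum_congr rfl fun x _ => by rw [hfe x]
      have h2 : ∑ x ∈ B, (D x : ℝ≥0∞) = ∑ i ∈ Finset.range k, (D (f i) : ℝ≥0∞) := by
        rw [hB, Finset.sum_image (fun x _ y _ h => hf.1 h)]
      have hcard : (A.image e.symm).card ≤ k :=
        le_trans Finset.card_image_le (le_trans Finset.card_image_le (by simp))
      rw [← h1, h2]
      exact aux_antitone_sum _ (fun m n h => by exact_mod_cast hmono m n h) k _ hcard
    have hsplit1 : (∑' x : X, (D x : ℝ≥0∞) * (if k ≤ (e.symm x : ℕ) then 1 else 0))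
        + (∑' x : X, (D x : ℝ≥0∞) * (if (e.symm x : ℕ) < k then 1 else 0)) = 1 := by
      rw [← ENNReal.tsum_add]
      have hpt : ∀ x : X, ((D x : ℝ≥0∞) * (if k ≤ (e.symm x : ℕ) then 1 else 0))
          + ((D x : ℝ≥0∞) * (if (e.symm x : ℕ) < k then 1 else 0)) = (D x : ℝ≥0∞) := by
        intro x
        by_cases h : k ≤ (e.symm x : ℕ)
        · rw [if_pos h, if_neg (by omega), mul_one, mul_zero, add_zero]
        · rw [if_neg h, if_pos (by omega), mul_zero, mul_one, zero_add]
      rw [tsum_congr hpt, htotal]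
    have hsplit2 : (∑' x : X, (D x : ℝ≥0∞) * (if (k : ℝ≥0∞) < 1 + I x then 1 else 0))
        + (∑' x : X, (D x : ℝ≥0∞) * (if 1 + I x ≤ (k : ℝ≥0∞) then 1 else 0)) = 1 := by
      rw [← ENNReal.tsum_add]
      have hpt : ∀ x : X, ((D x : ℝ≥0∞) * (if (k : ℝ≥0∞) < 1 + I x then 1 else 0))
          + ((D x : ℝ≥0∞) * (if 1 + I x ≤ (k : ℝ≥0∞) then 1 else 0)) = (D x : ℝ≥0∞) := by
        intro x
        by_cases h : (k : ℝ≥0∞) < 1 + I x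
        · rw [if_pos h, if_neg (not_le.mpr h), mul_one, mul_zero, add_zero]
        · rw [if_neg h, if_pos (not_lt.mp h), mul_zero, mul_one, zero_add]
      rw [tsum_congr hpt, htotal]
    have hBne : (∑ x ∈ B, (D x : ℝ≥0∞)) ≠ ⊤ := by
      have hle : (∑ x ∈ B, (D x : ℝ≥0∞)) ≤ 1 := by
        rw [← hsplit1, ← haB]
        exact le_add_self
      exact ne_top_of_le_ne_top ENNReal.one_ne_top hle
    have hkey : (∑' x : X, (D x : ℝ≥0∞) * (if k ≤ (e.symm x : ℕ) then 1 else 0))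
          + (∑ x ∈ B, (D x : ℝ≥0∞))
        ≤ (∑' x : X, (D x : ℝ≥0∞) * (if (k : ℝ≥0∞) < 1 + I x then 1 else 0))
          + (∑ x ∈ B, (D x : ℝ≥0∞)) := by
      calc (∑' x : X, (D x : ℝ≥0∞) * (if k ≤ (e.symm x : ℕ) then 1 else 0))
            + (∑ x ∈ B, (D x : ℝ≥0∞))
          = (∑' x : X, (D x : ℝ≥0∞) * (if k ≤ (e.symm x : ℕ) then 1 else 0))
            + (∑' x : X, (D x : ℝ≥0∞) * (if (e.symm x : ℕ) < k then 1 else 0)) := by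
            rw [haB]
        _ = 1 := hsplit1
        _ = (∑' x : X, (D x : ℝ≥0∞) * (if (k : ℝ≥0∞) < 1 + I x then 1 else 0))
            + (∑' x : X, (D x : ℝ≥0∞) * (if 1 + I x ≤ (k : ℝ≥0∞) then 1 else 0)) :=
            hsplit2.symm
        _ ≤ (∑' x : X, (D x : ℝ≥0∞) * (if (k : ℝ≥0∞) < 1 + I x then 1 else 0))
            + (∑ x ∈ B, (D x : ℝ≥0∞)) := add_le_add_right (le_trans hgB hBA) _
    exact (ENNReal.add_le_add_iff_right hBne).mp hkey
  calc ∑' n : ℕ, (D (f n) : ℝ≥0∞) * ((n : ℝ≥0∞) + 1)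
      = ∑' k : ℕ, ∑' x : X, (D x : ℝ≥0∞) * (if k ≤ (e.symm x : ℕ) then 1 else 0) := hLHS
    _ ≤ ∑' k : ℕ, ∑' x : X, (D x : ℝ≥0∞) * (if (k : ℝ≥0∞) < 1 + I x then 1 else 0) :=
        ENNReal.tsum_le_tsum hperk
    _ ≤ ∑' x : X, (D x : ℝ≥0∞) * (1 + I x) := hRHS
end

section
/- Let a : ℕ → [0,∞] be a non-increasing sequence and let σ : ℕ → ℕ be injective. Then Σ_{n∈ℕ} a(n)·(n+1) ≤ Σ_{n∈ℕ} a(n)·(σ(n)+1), where both sums take values in [0,∞]. -/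
open scoped ENNReal

lemma aux_mul_eq_tsum (b : ℝ≥0∞) (m : ℕ) :
    b * ((m : ℝ≥0∞) + 1) = ∑' k : ℕ, if k ≤ m then b else 0 := by
  rw [tsum_eq_sum (s := Finset.range (m + 1)) (by intro k hk; simp at hk; rw [if_neg (by omega)])]
  have : ∀ k ∈ Finset.range (m + 1), (if k ≤ m then b else 0) = b := by
    intro k hk; simp at hk; simp [hk]
  rw [Finset.sum_congr rfl this, Finset.sum_const, Finset.card_range, nsmul_eq_mul,
    mul_comm]
  push_cast
  rfl

lemma aux_key (a : ℕ → ℝ≥0∞) (ha : ∀ m n : ℕ, m ≤ n → a n ≤ a m)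
    (σ : ℕ → ℕ) (hσ : Function.Injective σ) (k : ℕ) :
    (∑' n : ℕ, if k ≤ n then a n else 0) ≤ ∑' n : ℕ, if k ≤ σ n then a n else 0 := by
  classical
  set S : ℕ → Prop := fun n => k ≤ σ n with hS
  -- the complement of S is finite
  have hSinf : (setOf S).Infinite := by
    by_contra h
    rw [Set.not_infinite] at h
    have hfin := h
    have hcompl : {n | σ n < k}.Finite := by
      have : {n | σ n < k} ⊆ σ ⁻¹' {m | m < k} := fun n hn => hn
      exact ((Set.finite_Iio k).preimage (hσ.injOn)).subset this
    have : (Set.univ : Set ℕ).Finite := by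
      have : (Set.univ : Set ℕ) ⊆ setOf S ∪ {n | σ n < k} := by
        intro n _
        by_cases h : k ≤ σ n
        · exact Or.inl h
        · exact Or.inr (not_le.1 h)
      exact (hfin.union hcompl).subset this
    exact Set.infinite_univ this
  -- counting bound
  have hcount : ∀ m : ℕ, m ≤ Nat.count S m + k := by
    intro m
    have h1 : Nat.count S m = ((Finset.range m).filter S).card := Nat.count_eq_card_filter_range _ _
    have h2 : ((Finset.range m).filter S).card + ((Finset.range m).filter (fun x => ¬ S x)).card = m := by
      rw [Finset.card_filter_add_card_filter_not, Finset.card_range]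
    have h3 : ((Finset.range m).filter (fun x => ¬ S x)).card ≤ k := by
      have : ((Finset.range m).filter (fun x => ¬ S x)).card ≤ (Finset.range k).card := by
        apply Finset.card_le_card_of_injOn σ
        · intro x hx
          simp only [Finset.mem_coe, Finset.mem_filter, hS, not_le] at hx
          simpa using hx.2
        · exact hσ.injOn
      simpa using this
    omega
  -- nth bound
  have hnth : ∀ j : ℕ, Nat.nth S j ≤ j + k := by
    intro j
    have := hcount (Nat.nth S j)
    rwa [Nat.count_nth_of_infinite hSinf] at this
  -- rewrite LHS as sum over Ici k
  have hLHS : (∑' n : ℕ, if k ≤ n then a n else 0) = ∑' n : (Set.Ici k : Set ℕ), a n := by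
    have h : ∀ n : ℕ, (if k ≤ n then a n else 0) = (Set.Ici k).indicator a n := by
      intro n; simp [Set.indicator, Set.mem_Ici]
    rw [tsum_congr h]
    exact (tsum_subtype _ _).symm
  rw [hLHS]
  -- injection
  refine Summable.tsum_le_tsum_of_inj (fun n : (Set.Ici k : Set ℕ) => Nat.nth S (n.1 - k)) ?_
    (fun _ _ => zero_le) ?_ ENNReal.summable ENNReal.summable
  · intro x y h
    have := Nat.nth_injective hSinf h
    have hx := x.2
    have hy := y.2
    simp only [Set.mem_Ici] at hx hy
    exact Subtype.ext (by omega)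
  · rintro ⟨n, hn⟩
    simp only [Set.mem_Ici] at hn
    have hmem : S (Nat.nth S (n - k)) := Nat.nth_mem_of_infinite hSinf _
    rw [if_pos (show k ≤ σ (Nat.nth S (n - k)) from hmem)]
    have hle : Nat.nth S (n - k) ≤ n := by
      have := hnth (n - k); omega
    exact ha _ _ hle

/-- Let `a : ℕ → [0,∞]` be a non-increasing sequence and `σ : ℕ → ℕ` injective.
Then `∑ n, a n · (n+1) ≤ ∑ n, a n · (σ n + 1)`, both sums valued in `[0,∞]`. -/
theorem rearrangement_inequality_of_injective (a : ℕ → ℝ≥0∞)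
    (ha : ∀ m n : ℕ, m ≤ n → a n ≤ a m)
    (σ : ℕ → ℕ) (hσ : Function.Injective σ) :
    ∑' n : ℕ, a n * ((n : ℝ≥0∞) + 1) ≤ ∑' n : ℕ, a n * ((σ n : ℝ≥0∞) + 1) := by
  calc ∑' n : ℕ, a n * ((n : ℝ≥0∞) + 1)
      = ∑' n : ℕ, ∑' k : ℕ, (if k ≤ n then a n else 0) := by
        simp_rw [aux_mul_eq_tsum]
    _ = ∑' k : ℕ, ∑' n : ℕ, (if k ≤ n then a n else 0) := ENNReal.tsum_comm
    _ ≤ ∑' k : ℕ, ∑' n : ℕ, (if k ≤ σ n then a n else 0) :=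
        ENNReal.tsum_le_tsum fun k => aux_key a ha σ hσ k
    _ = ∑' n : ℕ, ∑' k : ℕ, (if k ≤ σ n then a n else 0) := ENNReal.tsum_comm
    _ = ∑' n : ℕ, a n * ((σ n : ℝ≥0∞) + 1) := by
        simp_rw [aux_mul_eq_tsum]
end

section
/- Let D be the probability distribution on the natural numbers defined by D(n) = 1/2^{n+1}, and let √D be the distribution defined by √D(n) = (1/(1+√2)) · 1/2^{(n+1)/2}. Then √D is a probability distribution on ℕ, its loss with respect to D is L(√D,D) = Σ_{n≥0} D(n)/√D(n) = (1+√2)², and √D is loss optimal among sampling algorithms: for every probability distribution D' on ℕ, (1+√2)² ≤ Σ_{n≥0} D(n)/D'(n). -/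
open scoped ENNReal NNReal


section aux

noncomputable def rr : ℝ≥0∞ := ENNReal.ofReal (Real.sqrt 2)⁻¹

lemma sqrt2_pos : (0:ℝ) < Real.sqrt 2 := Real.sqrt_pos.2 (by norm_num)

lemma one_lt_sqrt2 : (1:ℝ) < Real.sqrt 2 := by
  have := Real.sq_sqrt (by norm_num : (2:ℝ) ≥ 0)
  nlinarith [sqrt2_pos]

lemma key_pow (n : ℕ) : (1:ℝ≥0∞) / (2 : ℝ≥0∞) ^ (((n : ℝ) + 1) / 2) = rr ^ (n+1) := by
  have h2 : (2:ℝ≥0∞) = ENNReal.ofReal 2 := by simp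
  rw [one_div, h2, ENNReal.ofReal_rpow_of_pos (by norm_num),
    ← ENNReal.ofReal_inv_of_pos (Real.rpow_pos_of_pos (by norm_num) _), rr,
    ← ENNReal.ofReal_pow (inv_nonneg.2 (Real.sqrt_nonneg 2))]
  congr 1
  rw [← Real.rpow_natCast ((Real.sqrt 2)⁻¹) (n+1), ← Real.rpow_neg_one (Real.sqrt 2),
    Real.sqrt_eq_rpow, ← Real.rpow_mul (by positivity), ← Real.rpow_mul (by positivity),
    ← Real.rpow_neg_one ((2:ℝ) ^ (((n:ℝ)+1)/2)), ← Real.rpow_mul (by positivity)]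
  congr 1
  push_cast
  ring

lemma rr_lt_one : rr < 1 := by
  rw [rr]
  have : (Real.sqrt 2)⁻¹ < 1 := by
    rw [inv_lt_one_iff₀]; right; exact one_lt_sqrt2
  calc ENNReal.ofReal (Real.sqrt 2)⁻¹ < ENNReal.ofReal 1 := by
        exact (ENNReal.ofReal_lt_ofReal_iff (by norm_num)).2 this
    _ = 1 := by simp

lemma sum_rr : ∑' n : ℕ, rr ^ (n+1) = ENNReal.ofReal (1 + Real.sqrt 2) := by
  have : ∑' n : ℕ, rr ^ (n+1) = (∑' n : ℕ, rr ^ n) * rr := by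
    simp_rw [pow_succ]; exact ENNReal.tsum_mul_right
  rw [this, ENNReal.tsum_geometric]
  have h1 : (1:ℝ≥0∞) - rr = ENNReal.ofReal (1 - (Real.sqrt 2)⁻¹) := by
    rw [rr, ENNReal.ofReal_sub _ (by positivity)]; simp
  have hpos : (0:ℝ) < 1 - (Real.sqrt 2)⁻¹ := by
    have : (Real.sqrt 2)⁻¹ < 1 := by rw [inv_lt_one_iff₀]; right; exact one_lt_sqrt2
    linarith
  rw [h1, ← ENNReal.ofReal_inv_of_pos hpos, rr, ← ENNReal.ofReal_mul (by positivity)]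
  congr 1
  have hs := Real.sq_sqrt (by norm_num : (0:ℝ) ≤ 2)
  have h0 := sqrt2_pos
  rw [mul_comm, ← mul_inv]
  have h2 : Real.sqrt 2 * (1 - (Real.sqrt 2)⁻¹) = Real.sqrt 2 - 1 := by field_simp
  rw [h2]
  exact inv_eq_of_mul_eq_one_right (by nlinarith)

end aux

lemma rr_ne_zero : rr ≠ 0 := (ENNReal.ofReal_pos.2 (by positivity)).ne'
lemma rr_ne_top : rr ≠ ∞ := ENNReal.ofReal_ne_top

lemma D_eq (n : ℕ) : (1:ℝ≥0∞) / 2 ^ (n+1) = rr ^ (n+1) * rr ^ (n+1) := by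
  have h : rr * rr = (2:ℝ≥0∞)⁻¹ := by
    rw [rr, ← ENNReal.ofReal_mul (by positivity), ← mul_inv,
      Real.mul_self_sqrt (by norm_num), ENNReal.ofReal_inv_of_pos (by norm_num)]
    norm_num
  rw [one_div, ENNReal.inv_pow, ← h, mul_pow]

lemma sum_one : ∑' n : ℕ,
    ENNReal.ofReal (1 / (1 + Real.sqrt 2)) * (1 / (2 : ℝ≥0∞) ^ (((n : ℝ) + 1) / 2)) = 1 := by
  simp_rw [key_pow]
  rw [ENNReal.tsum_mul_left, sum_rr, ← ENNReal.ofReal_mul (by positivity)]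
  have h0 : (1 : ℝ) + Real.sqrt 2 ≠ 0 := by positivity
  rw [one_div_mul_cancel h0, ENNReal.ofReal_one]


/-- Let `D` be the probability distribution on `ℕ` defined by `D n = 1/2^(n+1)`, and let
`√D` be defined by `√D n = (1/(1+√2)) · 1/2^((n+1)/2)`. Then `√D` is a probability
distribution on `ℕ`, its loss with respect to `D` is
`L(√D,D) = ∑ D n / √D n = (1+√2)²`, and `√D` is loss optimal among sampling algorithms:
for every probability distribution `D'` on `ℕ`, `(1+√2)² ≤ ∑ D n / D' n` (losses valued
in `[0,∞]`, with conventions `a/0 = ∞` for `a > 0` and `0/0 = 0`). -/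
theorem sqrt_geometric_distribution_loss_optimal
    (D sqrtD : ℕ → ℝ≥0∞)
    (hD : ∀ n, D n = 1 / 2 ^ (n + 1))
    (hsqrtD : ∀ n, sqrtD n
      = ENNReal.ofReal (1 / (1 + Real.sqrt 2)) * (1 / (2 : ℝ≥0∞) ^ (((n : ℝ) + 1) / 2))) :
    (∑' n : ℕ, sqrtD n = 1) ∧
    (∑' n : ℕ, D n / sqrtD n = ENNReal.ofReal ((1 + Real.sqrt 2) ^ 2)) ∧
    ∀ D' : ℕ → ℝ≥0∞, (∑' n : ℕ, D' n = 1) →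
      ENNReal.ofReal ((1 + Real.sqrt 2) ^ 2) ≤ ∑' n : ℕ, D n / D' n := by
  have hcinv : (ENNReal.ofReal (1 / (1 + Real.sqrt 2)))⁻¹ = ENNReal.ofReal (1 + Real.sqrt 2) := by
    rw [← ENNReal.ofReal_inv_of_pos (by positivity), one_div, inv_inv]
  refine ⟨?_, ?_, ?_⟩
  · rw [tsum_congr hsqrtD]; exact sum_one
  · have hterm : ∀ n, D n / sqrtD n = ENNReal.ofReal (1 + Real.sqrt 2) * rr ^ (n+1) := by
      intro n
      rw [hD n, hsqrtD n, key_pow n, D_eq n]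
      have ha0 : rr ^ (n+1) ≠ 0 := pow_ne_zero _ rr_ne_zero
      have hat : rr ^ (n+1) ≠ ∞ := ENNReal.pow_ne_top rr_ne_top
      have hc0 : ENNReal.ofReal (1 / (1 + Real.sqrt 2)) ≠ 0 :=
        (ENNReal.ofReal_pos.2 (by positivity)).ne'
      rw [div_eq_mul_inv, ENNReal.mul_inv (Or.inl hc0) (Or.inl ENNReal.ofReal_ne_top), hcinv]
      calc rr ^ (n+1) * rr ^ (n+1) * (ENNReal.ofReal (1 + Real.sqrt 2) * (rr ^ (n+1))⁻¹)
          = ENNReal.ofReal (1 + Real.sqrt 2) * rr ^ (n+1) * (rr ^ (n+1) * (rr ^ (n+1))⁻¹) := by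
            ring
        _ = ENNReal.ofReal (1 + Real.sqrt 2) * rr ^ (n+1) := by
            rw [ENNReal.mul_inv_cancel ha0 hat, mul_one]
    rw [tsum_congr hterm, ENNReal.tsum_mul_left, sum_rr,
      ← ENNReal.ofReal_mul (by positivity), sq]
  · intro D' hD'
    by_cases hz : ∃ n, D' n = 0
    · obtain ⟨n, hn⟩ := hz
      have htop : D n / D' n = ∞ := by
        rw [hn, ENNReal.div_zero]
        rw [hD n]
        simp [ENNReal.pow_ne_top]
      exact le_top.trans (htop ▸ ENNReal.le_tsum n)
    · push_neg at hz
      have hnt : ∀ n, D' n ≠ ∞ := fun n =>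
        ((ENNReal.le_tsum n).trans_lt (by rw [hD']; exact ENNReal.one_lt_top)).ne
      set f : ℕ → ℝ≥0∞ := fun n => (D n / D' n) ^ ((1:ℝ)/2) with hf
      set g : ℕ → ℝ≥0∞ := fun n => (D' n) ^ ((1:ℝ)/2) with hg
      have hfg : ∀ n, (f * g) n = rr ^ (n+1) := by
        intro n
        show f n * g n = _
        rw [hf, hg]
        simp only
        rw [← ENNReal.mul_rpow_of_nonneg _ _ (by norm_num),
          ENNReal.div_mul_cancel (hz n) (hnt n), hD n, D_eq n, ← pow_two,
          ← ENNReal.rpow_natCast (rr ^ (n+1)) 2, ← ENNReal.rpow_mul]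
        norm_num
      have holder := ENNReal.lintegral_mul_le_Lp_mul_Lq MeasureTheory.Measure.count
        (Real.HolderConjugate.two_two : Real.HolderConjugate 2 2)
        (measurable_of_countable f).aemeasurable (measurable_of_countable g).aemeasurable
      rw [MeasureTheory.lintegral_count, MeasureTheory.lintegral_count,
        MeasureTheory.lintegral_count] at holder
      have hF : ∀ n, f n ^ (2:ℝ) = D n / D' n := by
        intro n; rw [hf]; simp only; rw [← ENNReal.rpow_mul]; norm_num
      have hG : ∀ n, g n ^ (2:ℝ) = D' n := by
        intro n; rw [hg]; simp only; rw [← ENNReal.rpow_mul]; norm_num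
      rw [tsum_congr hfg, tsum_congr hF, tsum_congr hG, sum_rr, hD',
        ENNReal.one_rpow, mul_one] at holder
      have h2 : ENNReal.ofReal ((1 + Real.sqrt 2) ^ 2)
          = (ENNReal.ofReal (1 + Real.sqrt 2)) ^ 2 := by
        rw [ENNReal.ofReal_pow (by positivity)]
      rw [h2]
      calc (ENNReal.ofReal (1 + Real.sqrt 2)) ^ 2
          ≤ ((∑' n, D n / D' n) ^ ((1:ℝ)/2)) ^ 2 := pow_le_pow_left₀ zero_le holder 2
        _ = ∑' n, D n / D' n := by
            rw [← ENNReal.rpow_natCast _ 2, ← ENNReal.rpow_mul]; norm_num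
end

section
/- Let D be a probability distribution on a countable set X such that Σ_{x∈X} √(D(x)) < ∞, and let f : ℕ → X be a bijection such that n ↦ D(f(n)) is non-increasing. Then the loss of the enumeration f is at most the loss of the optimal sampling algorithm: Σ_{n∈ℕ} D(f(n))·(n+1) ≤ (Σ_{x∈X} √(D(x)))². -/
open scoped ENNReal NNReal

/-- Let `D` be a probability distribution on a countable set `X` with `∑ √(D x) < ∞`,
and let `f : ℕ → X` be a bijection enumerating `X` in non-increasing order of
probabilities. Then the loss of the enumeration `f` is at most the loss of the optimal
sampling algorithm: `∑ n, D (f n) · (n+1) ≤ (∑ √(D x))²`, both sides in `[0,∞]`. -/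
theorem sorted_enumeration_loss_le_optimal_sampling_loss {X : Type*} [Countable X]
    (D : X → ℝ≥0) (hD : ∑' x, D x = 1)
    (hfin : (∑' x, (NNReal.sqrt (D x) : ℝ≥0∞)) ≠ ∞)
    (f : ℕ → X) (hf : Function.Bijective f)
    (hmono : ∀ m n : ℕ, m ≤ n → D (f n) ≤ D (f m)) :
    ∑' n : ℕ, (D (f n) : ℝ≥0∞) * ((n : ℝ≥0∞) + 1)
      ≤ (∑' x, (NNReal.sqrt (D x) : ℝ≥0∞)) ^ 2 := by
  set S := ∑' x, (NNReal.sqrt (D x) : ℝ≥0∞) with hS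
  have hsum : ∑' n : ℕ, (NNReal.sqrt (D (f n)) : ℝ≥0∞) = S := by
    rw [hS, ← (Equiv.ofBijective f hf).tsum_eq (fun x => (NNReal.sqrt (D x) : ℝ≥0∞))]
    rfl
  have key : ∀ n : ℕ, (D (f n) : ℝ≥0∞) * ((n : ℝ≥0∞) + 1)
      ≤ (NNReal.sqrt (D (f n)) : ℝ≥0∞) * S := by
    intro n
    have h1 : ((n : ℝ≥0∞) + 1) * (NNReal.sqrt (D (f n)) : ℝ≥0∞) ≤ S := by
      calc ((n : ℝ≥0∞) + 1) * (NNReal.sqrt (D (f n)) : ℝ≥0∞)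
          = ∑ _k ∈ Finset.range (n + 1), (NNReal.sqrt (D (f n)) : ℝ≥0∞) := by
            rw [Finset.sum_const, Finset.card_range, nsmul_eq_mul]
            push_cast
            ring
        _ ≤ ∑ k ∈ Finset.range (n + 1), (NNReal.sqrt (D (f k)) : ℝ≥0∞) := by
            refine Finset.sum_le_sum fun k hk => ?_
            exact_mod_cast NNReal.sqrt_le_sqrt.mpr
              (hmono k n (Nat.lt_succ_iff.mp (Finset.mem_range.mp hk)))
        _ ≤ ∑' k : ℕ, (NNReal.sqrt (D (f k)) : ℝ≥0∞) := ENNReal.sum_le_tsum _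
        _ = S := hsum
    have h2 : (D (f n) : ℝ≥0∞)
        = (NNReal.sqrt (D (f n)) : ℝ≥0∞) * (NNReal.sqrt (D (f n)) : ℝ≥0∞) := by
      rw [← ENNReal.coe_mul, NNReal.mul_self_sqrt]
    calc (D (f n) : ℝ≥0∞) * ((n : ℝ≥0∞) + 1)
        = (NNReal.sqrt (D (f n)) : ℝ≥0∞)
            * (((n : ℝ≥0∞) + 1) * (NNReal.sqrt (D (f n)) : ℝ≥0∞)) := by
          rw [h2]; ring
      _ ≤ (NNReal.sqrt (D (f n)) : ℝ≥0∞) * S := by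
          exact mul_le_mul_right h1 _
  calc ∑' n : ℕ, (D (f n) : ℝ≥0∞) * ((n : ℝ≥0∞) + 1)
      ≤ ∑' n : ℕ, (NNReal.sqrt (D (f n)) : ℝ≥0∞) * S := ENNReal.tsum_le_tsum key
    _ = (∑' n : ℕ, (NNReal.sqrt (D (f n)) : ℝ≥0∞)) * S := ENNReal.tsum_mul_right
    _ = S ^ 2 := by rw [hsum, sq]
end
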